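/- Suppose b > d (so that x̄ = 0 is not a stable equilibrium of the uncontrolled replicator equation). Let φ : ℝ → ℝ be continuously differentiable, let (γ₁, γ₂) be any of (1,0), (0,1), (−1,0), (0,−1), and let (x, g) be a solution of the controlled replicator equation with x(0) ∈ (0,1) and g(0) > 0. If g(t) → 0 as t → ∞, then x(t) does not converge to 0 as t → ∞. -/

import Mathlib

/-- `(x, g)` is a solution of the controlled replicator equation
`ẋ = x(1−x)((a+d−b−c)x + b − d + γ₁ g x + γ₂ g (1−x))`, `ġ = φ(x) g` on `[0,∞)`. -/
def IsControlledSolution (a b c d γ₁ γ₂ : ℝ) (φ : ℝ → ℝ) (x g : ℝ → ℝ) : Prop :=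
  ∀ t : ℝ, 0 ≤ t →
    HasDerivAt x
      (x t * (1 - x t) *
        ((a + d - b - c) * x t + (b - d) + γ₁ * g t * x t + γ₂ * g t * (1 - x t))) t ∧
    HasDerivAt g (φ (x t) * g t) t

/-!
Write the equation as `ẋ = r(t) x` with `r = (1 - x) · (payoff gap)`. Then
`x t = x 0 · exp (∫₀ᵗ r)` stays positive. If both `x` and `g` tended to `0`, the payoff gap would
tend to `b - d > 0`, so `r` would be eventually positive and `x` eventually nondecreasing; a
positive, eventually nondecreasing function cannot tend to `0`.
-/

open Set Filter Topology Real

theorem eq_mul_exp_integral_of_hasDerivAt {x h : ℝ → ℝ} (hh : ContinuousOn h (Ici 0))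
    (hx : ∀ t, 0 ≤ t → HasDerivAt x (h t * x t) t) {t : ℝ} (ht : 0 ≤ t) :
    x t = x 0 * exp (∫ u in (0 : ℝ)..t, h u) := by
  set H : ℝ → ℝ := fun s => ∫ u in (0 : ℝ)..s, h u
  have hsub : ∀ s : ℝ, 0 ≤ s → uIcc 0 s ⊆ Ici 0 := fun s hs => by
    rw [uIcc_of_le hs]; exact Icc_subset_Ici_self
  have hH : ∀ s, 0 ≤ s → HasDerivWithinAt H (h s) (Ici s) s := fun s hs =>
    intervalIntegral.integral_hasDerivWithinAt_right
      ((hh.mono (hsub s hs)).intervalIntegrable)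
      ((hh.stronglyMeasurableAtFilter_nhdsWithin measurableSet_Ici s).filter_mono
        (nhdsWithin_mono _ fun u hu => hs.trans (hu.le)))
      ((hh s hs).mono fun u hu => hs.trans (hu.le))
  have hHcont : ContinuousOn H (Icc 0 t) := by
    simpa only [uIcc_of_le ht] using intervalIntegral.continuousOn_primitive_interval
      ((hh.mono (hsub t ht)).integrableOn_compact isCompact_uIcc)
  set F : ℝ → ℝ := fun s => x s * exp (-H s)
  have hxcont : ContinuousOn x (Icc 0 t) := fun s hs =>
    (hx s hs.1).continuousAt.continuousWithinAt
  have hFcont : ContinuousOn F (Icc 0 t) :=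
    hxcont.mul (continuous_exp.comp_continuousOn hHcont.neg)
  have hF : ∀ s ∈ Ico 0 t, HasDerivWithinAt F 0 (Ici s) s := fun s hs => by
    have hexp : HasDerivWithinAt (fun u => exp (-H u)) (exp (-H s) * -h s) (Ici s) s :=
      (hH s hs.1).neg.exp
    exact ((hx s hs.1).hasDerivWithinAt.fun_mul hexp).congr_deriv (by ring)
  have hFt : F t = F 0 := constant_of_has_deriv_right_zero hFcont hF t (right_mem_Icc.2 ht)
  simp only [F, H, intervalIntegral.integral_same, neg_zero, exp_zero, mul_one] at hFt
  rw [← hFt, mul_assoc, ← exp_add, neg_add_cancel, exp_zero, mul_one]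

theorem MonotoneOn.ge_of_tendsto {α β : Type*} [SemilatticeSup α] [Nonempty α] [Preorder β]
    [TopologicalSpace β] [ClosedIciTopology β] {f : α → β} {T : α} {l : β}
    (hf : MonotoneOn f (Ici T)) (hl : Tendsto f atTop (𝓝 l)) : f T ≤ l :=
  _root_.ge_of_tendsto hl ((eventually_ge_atTop T).mono fun _ ht => hf self_mem_Ici ht ht)

/-- The controlled equation for the state reads
`ẋ = x (1 - x) · controlledPayoffGap a b c d γ₁ γ₂ x g`. -/
def controlledPayoffGap (a b c d γ₁ γ₂ x g : ℝ) : ℝ :=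
  (a + d - b - c) * x + (b - d) + γ₁ * g * x + γ₂ * g * (1 - x)

theorem continuous_controlledPayoffGap (a b c d γ₁ γ₂ : ℝ) :
    Continuous (Function.uncurry (controlledPayoffGap a b c d γ₁ γ₂)) := by
  unfold Function.uncurry controlledPayoffGap
  fun_prop

theorem tendsto_controlledPayoffGap {a b c d γ₁ γ₂ : ℝ} {l : Filter ℝ} {x g : ℝ → ℝ}
    (hx : Tendsto x l (𝓝 0)) (hg : Tendsto g l (𝓝 0)) :
    Tendsto (fun t => controlledPayoffGap a b c d γ₁ γ₂ (x t) (g t)) l (𝓝 (b - d)) := by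
  simpa [Function.comp_def, controlledPayoffGap] using
    ((continuous_controlledPayoffGap a b c d γ₁ γ₂).tendsto (0, 0)).comp (hx.prodMk_nhds hg)

namespace IsControlledSolution

variable {a b c d γ₁ γ₂ : ℝ} {φ x g : ℝ → ℝ}

theorem continuousOn_state (hsol : IsControlledSolution a b c d γ₁ γ₂ φ x g) :
    ContinuousOn x (Ici 0) := fun t ht => (hsol t ht).1.continuousAt.continuousWithinAt

theorem continuousOn_gain (hsol : IsControlledSolution a b c d γ₁ γ₂ φ x g) :
    ContinuousOn g (Ici 0) := fun t ht => (hsol t ht).2.continuousAt.continuousWithinAt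

theorem hasDerivAt_state (hsol : IsControlledSolution a b c d γ₁ γ₂ φ x g) {t : ℝ}
    (ht : 0 ≤ t) :
    HasDerivAt x ((1 - x t) * controlledPayoffGap a b c d γ₁ γ₂ (x t) (g t) * x t) t := by
  convert (hsol t ht).1 using 1
  unfold controlledPayoffGap
  ring

theorem state_pos (hsol : IsControlledSolution a b c d γ₁ γ₂ φ x g) (hx0 : 0 < x 0) {t : ℝ}
    (ht : 0 ≤ t) : 0 < x t := by
  have hx := hsol.continuousOn_state
  have hg := hsol.continuousOn_gain
  have hrate : ContinuousOn
      (fun s => (1 - x s) * controlledPayoffGap a b c d γ₁ γ₂ (x s) (g s)) (Ici 0) := by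
    unfold controlledPayoffGap
    fun_prop
  rw [eq_mul_exp_integral_of_hasDerivAt hrate (fun s hs => hsol.hasDerivAt_state hs) ht]
  positivity

theorem exists_monotoneOn_Ici (hsol : IsControlledSolution a b c d γ₁ γ₂ φ x g) (hbd : d < b)
    (hx0 : 0 < x 0) (hx : Tendsto x atTop (𝓝 0)) (hg : Tendsto g atTop (𝓝 0)) :
    ∃ T, 0 ≤ T ∧ MonotoneOn x (Ici T) := by
  have hrate : Tendsto (fun t => (1 - x t) * controlledPayoffGap a b c d γ₁ γ₂ (x t) (g t))
      atTop (𝓝 ((1 - 0) * (b - d))) :=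
    (tendsto_const_nhds.sub hx).mul (tendsto_controlledPayoffGap hx hg)
  obtain ⟨T, hT⟩ := eventually_atTop.1 <| (eventually_ge_atTop 0).and <|
    hrate.eventually (lt_mem_nhds (by linarith : (0 : ℝ) < (1 - 0) * (b - d)))
  have hT0 : 0 ≤ T := (hT T le_rfl).1
  refine ⟨T, hT0, monotoneOn_of_hasDerivWithinAt_nonneg (convex_Ici T)
    (f' := fun t => (1 - x t) * controlledPayoffGap a b c d γ₁ γ₂ (x t) (g t) * x t)
    (hsol.continuousOn_state.mono (Ici_subset_Ici.2 hT0)) (fun t ht => ?_) (fun t ht => ?_)⟩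
  · rw [interior_Ici] at ht
    exact (hsol.hasDerivAt_state (hT0.trans ht.le)).hasDerivWithinAt
  · rw [interior_Ici] at ht
    obtain ⟨ht0, hpos⟩ := hT t ht.le
    exact (mul_pos hpos (hsol.state_pos hx0 ht0)).le

end IsControlledSolution

theorem no_vanishing_gain_consensus_general (a b c d γ₁ γ₂ : ℝ) (hbd : b > d) (φ : ℝ → ℝ)
    (x g : ℝ → ℝ) (hsol : IsControlledSolution a b c d γ₁ γ₂ φ x g)
    (hx0 : x 0 ∈ Set.Ioo (0 : ℝ) 1)
    (hgain : Filter.Tendsto g Filter.atTop (nhds 0)) :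
    ¬ Filter.Tendsto x Filter.atTop (nhds 0) := by
  intro hx
  obtain ⟨T, hT0, hmono⟩ := hsol.exists_monotoneOn_Ici hbd hx0.1 hx hgain
  exact (hsol.state_pos hx0.1 hT0).not_ge (hmono.ge_of_tendsto hx)

/-- If `b > d` (so `x̄ = 0` is not a stable equilibrium of the uncontrolled replicator
equation), then no adaptive-gain controller whose gain vanishes asymptotically can steer
the state to `0`. -/
theorem no_vanishing_gain_consensus (a b c d γ₁ γ₂ : ℝ) (hbd : b > d) (φ : ℝ → ℝ)
    (hφ : ContDiff ℝ 1 φ)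
    (hγ : (γ₁, γ₂) = (1, 0) ∨ (γ₁, γ₂) = (0, 1) ∨ (γ₁, γ₂) = (-1, 0) ∨ (γ₁, γ₂) = (0, -1))
    (x g : ℝ → ℝ) (hsol : IsControlledSolution a b c d γ₁ γ₂ φ x g)
    (hx0 : x 0 ∈ Set.Ioo (0 : ℝ) 1) (hg0 : 0 < g 0)
    (hgain : Filter.Tendsto g Filter.atTop (nhds 0)) :
    ¬ Filter.Tendsto x Filter.atTop (nhds 0) :=
  no_vanishing_gain_consensus_general a b c d γ₁ γ₂ hbd φ x g hsol hx0 hgain
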